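/- Let alpha be an assembly, c a valid configuration of alpha, and R a rigid component of alpha. If alpha has no valid configuration other than c in which R retains the same orientation as in c, then alpha itself is a rigid component (its only possible reconfiguration is inversion of the whole assembly). -/

import Mathlib

/-!
A formalization of the Flexible Tile Assembly Model (FTAM).

Tiles are unit squares placed on coplanar lattice points of `ℤ³`; each of the four
sides (N, E, S, W) carries a glue (an optional label with a complementation mark,
a strength, and a flexibility flag).  Assemblies are graphs of tiles with bonds;
configurations assign an orientation (Up / Down / Straight) to every bond
(rigid bonds are forced Straight); a configuration is valid when it can be realized
by an embedding of the tiles into `ℤ³` without overlaps, without bonding through the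
same space, and realizing every bond geometrically (which in particular rules out
contradicting bond loops).
-/

set_option synthInstance.maxSize 2048

namespace FTAM

/-- Integer vectors in `ℤ³`. -/
abbrev Vec3 := Fin 3 → ℤ

/-- The unit vector along axis `i`. -/
def unitVec (i : Fin 3) : Vec3 := fun j => if j = i then 1 else 0

/-- Cross product on `ℤ³`. -/
def cross (u v : Vec3) : Vec3 := fun i => u (i + 1) * v (i + 2) - u (i + 2) * v (i + 1)

/-- A coordinate direction: an axis together with a sign (`true` = positive). -/
abbrev Dir := Fin 3 × Bool

/-- The vector of a direction. -/
def dirVec (d : Dir) : Vec3 := fun j => (if d.2 then 1 else -1) * unitVec d.1 j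

/-- Sides of a tile: `0` = N, `1` = E, `2` = S, `3` = W. -/
abbrev Side := Fin 4

/-- Orientations of a bond: `0` = Up, `1` = Down, `2` = Straight. -/
abbrev Orientation := Fin 3

def Orientation.up : Orientation := 0
def Orientation.down : Orientation := 1
def Orientation.straight : Orientation := 2

/-- Inversion of an orientation: swaps Up and Down, fixes Straight. -/
def invertOr (o : Orientation) : Orientation := if o = 0 then 1 else if o = 1 then 0 else 2

/-- A glue: an optional label (a base label together with a `Bool` marking the starred
complement; `none` is the null glue), a strength and a flexibility flag
(`true` = flexible). -/
abbrev Glue := Option (ℕ × Bool) × ℕ × Bool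

def glueStrength (g : Glue) : ℕ := g.2.1
def glueFlexible (g : Glue) : Bool := g.2.2

/-- Two glues can bind: complementary labels, equal strengths, equal flexibility. -/
def gluesMatch (g g' : Glue) : Prop :=
  (∃ a b, g.1 = some (a, b) ∧ g'.1 = some (a, !b)) ∧ g.2.1 = g'.2.1 ∧ g.2.2 = g'.2.2

/-- A tile type: the glues on its N, E, S and W sides. -/
abbrev TileType := Glue × Glue × Glue × Glue

def tileGlue (t : TileType) (s : Side) : Glue :=
  if s = 0 then t.1 else if s = 1 then t.2.1 else if s = 2 then t.2.2.1 else t.2.2.2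

/-- A bond: an unordered pair of (tile index, side) pairs, recorded as a pair. -/
abbrev BondSpec := (ℕ × Side) × (ℕ × Side)

/-- An assembly: the list of its tiles (given by their tile types) together with the
list of its bonds. -/
abbrev Assembly := List TileType × List BondSpec

/-- A configuration: an orientation for each bond (in the order of the bond list). -/
abbrev Configuration := List Orientation

/-- A placement of a tile: its location (minimal corner), the normal direction of its
plane, and the direction its N side points to. -/
abbrev Placement := Vec3 × Dir × Dir

/-- An embedding: a placement for each tile (in the order of the tile list). -/
abbrev Embedding := List Placement

/-- The glue sitting on side `x.2` of tile `x.1` of the assembly. -/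
def glueAt (α : Assembly) (x : ℕ × Side) : Glue := tileGlue (α.1.getD x.1 default) x.2

/-- The chiral configuration: swap Up and Down on every bond, keep Straight. -/
def chiralCfg (c : Configuration) : Configuration := c.map invertOr

def normalAxis (p : Placement) : Fin 3 := p.2.1.1

def normalVec (p : Placement) : Vec3 := dirVec p.2.1

/-- Twice the center of a placed tile. -/
def center2 (p : Placement) : Vec3 :=
  (2 : ℤ) • p.1 + unitVec (normalAxis p + 1) + unitVec (normalAxis p + 2)

/-- The in-plane direction from the center of a placed tile towards the side `s`. -/
def sideDir (p : Placement) (s : Side) : Vec3 :=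
  if s = 0 then dirVec p.2.2
  else if s = 1 then cross (dirVec p.2.2) (normalVec p)
  else if s = 2 then -dirVec p.2.2
  else -cross (dirVec p.2.2) (normalVec p)

/-- Twice the midpoint of side `s` of a placed tile. -/
def sideMid (p : Placement) (s : Side) : Vec3 := center2 p + sideDir p s

/-- The direction along which side `s` of a placed tile runs. -/
def sideAxis (p : Placement) (s : Side) : Vec3 := cross (sideDir p s) (normalVec p)

/-- Well-formedness of a placement: the orientation is perpendicular to the normal. -/
def PlacementOK (p : Placement) : Prop := p.2.1.1 ≠ p.2.2.1

/-- Two sides of two placed tiles are adjacent (they occupy the same unit segment). -/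
def sidesAdjacent (p : Placement) (s : Side) (p' : Placement) (s' : Side) : Prop :=
  sideMid p s = sideMid p' s' ∧
    (sideAxis p s = sideAxis p' s' ∨ sideAxis p s = -sideAxis p' s')

/-- Geometric realization of a bond between side `s` of a tile placed at `p` and side
`s'` of a tile placed at `p'`, in relative orientation `θ`: the sides are adjacent and
the normals are Straight (equal), or meet in front (Up), or meet behind (Down). -/
def orientedBond (p : Placement) (s : Side) (p' : Placement) (s' : Side)
    (θ : Orientation) : Prop :=
  sidesAdjacent p s p' s' ∧
    (if θ = Orientation.straight then normalVec p = normalVec p'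
     else if θ = Orientation.up then
       ∃ t t' : ℤ, 0 < t ∧ 0 < t' ∧
         center2 p + t • normalVec p = center2 p' + t' • normalVec p'
     else
       ∃ t t' : ℤ, 0 < t ∧ 0 < t' ∧
         center2 p - t • normalVec p = center2 p' - t' • normalVec p')

/-- Two placements overlap if they occupy the same tile location. -/
def overlap (p p' : Placement) : Prop := p.1 = p'.1 ∧ normalAxis p = normalAxis p'

/-- Structural well-formedness of an assembly: bonds join existing tiles, each tile
side takes part in at most one bond, and bound glues are complementary with equal
strengths and equal flexibility flags. -/
def AssemblyWF (α : Assembly) : Prop :=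
  (∀ b ∈ α.2, b.1.1 < α.1.length ∧ b.2.1 < α.1.length) ∧
  (α.2.flatMap fun b => [b.1, b.2]).Nodup ∧
  ∀ b ∈ α.2, gluesMatch (glueAt α b.1) (glueAt α b.2)

/-- `e` is an embedding of the assembly `α` realizing the configuration `c`: tiles are
placed without overlaps, every bond is realized geometrically in its prescribed
orientation (so there are no contradicting bond loops), rigid bonds are Straight, and
no two pairs of coplanar tiles bind through the same space. -/
def Realizes (α : Assembly) (c : Configuration) (e : Embedding) : Prop :=
  AssemblyWF α ∧ e.length = α.1.length ∧ c.length = α.2.length ∧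
  (∀ p ∈ e, PlacementOK p) ∧
  (∀ i j, i < e.length → j < e.length → i ≠ j →
    ¬ overlap (e.getD i default) (e.getD j default)) ∧
  (∀ k, k < α.2.length →
    orientedBond (e.getD (α.2.getD k default).1.1 default) (α.2.getD k default).1.2
      (e.getD (α.2.getD k default).2.1 default) (α.2.getD k default).2.2
      (c.getD k Orientation.straight)) ∧
  (∀ k, k < α.2.length → glueFlexible (glueAt α (α.2.getD k default).1) = false →
    c.getD k Orientation.straight = Orientation.straight) ∧
  (∀ k k', k < α.2.length → k' < α.2.length → k ≠ k' →
    c.getD k Orientation.straight = Orientation.straight →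
    c.getD k' Orientation.straight = Orientation.straight →
    sideMid (e.getD (α.2.getD k default).1.1 default) (α.2.getD k default).1.2 ≠
      sideMid (e.getD (α.2.getD k' default).1.1 default) (α.2.getD k' default).1.2)

/-- A configuration is valid if some embedding realizes it. -/
def ValidConfig (α : Assembly) (c : Configuration) : Prop := ∃ e, Realizes α c e

/-- An assembly is rigid if it has a valid configuration and any two valid
configurations are equal or chiral to each other (so it has exactly one valid
configuration, or exactly two which are chiral versions of each other). -/
def Rigid (α : Assembly) : Prop :=
  (∃ c, ValidConfig α c) ∧
    ∀ c c', ValidConfig α c → ValidConfig α c' → c' = c ∨ c' = chiralCfg c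

/-- An assembly is flexible if it is not rigid. -/
def Flexible (α : Assembly) : Prop := ¬ Rigid α

/-- An FTAM system: a finite tile set, a seed assembly, and a temperature. -/
abbrev FTAMSystem := List TileType × Assembly × ℕ

/-- An attachment of one side of a new tile:
(side of the new tile, index of an existing tile, its side, bond orientation). -/
abbrev Attachment := Side × ℕ × Side × Orientation

/-- A frontier location: a tile type together with the attachments it binds by. -/
abbrev FrontierLoc := TileType × List Attachment

/-- The chiral version of a frontier location: invert all bond orientations. -/
def chiralFrontier (f : FrontierLoc) : FrontierLoc :=
  (f.1, f.2.map fun a => (a.1, a.2.1, a.2.2.1, invertOr a.2.2.2))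

/-- `f` is a frontier location of assembly `α` in valid configuration `c`, for system
`S`: a tile of type `f.1 ∈ S.1` can be placed, in some embedding realizing `c`, without
overlap, binding via the attachments `f.2` (matching glues, rigid glues Straight,
geometrically realized) with total strength at least the temperature `S.2.2`. -/
def IsFrontier (S : FTAMSystem) (α : Assembly) (c : Configuration) (f : FrontierLoc) :
    Prop :=
  f.1 ∈ S.1 ∧ f.2 ≠ [] ∧ (f.2.map Prod.fst).Nodup ∧
  (∀ a ∈ f.2, a.2.1 < α.1.length) ∧
  S.2.2 ≤ (f.2.map fun a => glueStrength (tileGlue f.1 a.1)).sum ∧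
  ∃ e p, Realizes α c e ∧ PlacementOK p ∧ (∀ q ∈ e, ¬ overlap p q) ∧
    ∀ a ∈ f.2,
      gluesMatch (tileGlue f.1 a.1) (glueAt α (a.2.1, a.2.2.1)) ∧
      (glueFlexible (tileGlue f.1 a.1) = false → a.2.2.2 = Orientation.straight) ∧
      orientedBond p a.1 (e.getD a.2.1 default) a.2.2.1 a.2.2.2

/-- The assembly obtained by attaching a tile at frontier location `f`. -/
def attachAsm (α : Assembly) (f : FrontierLoc) : Assembly :=
  (α.1 ++ [f.1], α.2 ++ f.2.map fun a => ((α.1.length, a.1), (a.2.1, a.2.2.1)))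

/-- The configuration obtained by extending `c` with the orientations of the new bonds. -/
def attachCfg (c : Configuration) (f : FrontierLoc) : Configuration :=
  c ++ f.2.map fun a => a.2.2.2

/-- The bond list `N` can be added to `α` while keeping some valid configuration. -/
def ExtendsBonds (α : Assembly) (N : List BondSpec) : Prop :=
  ∃ c, ValidConfig (α.1, α.2 ++ N) c

/-- One step of the assembly process: attach a tile of some type of the system at a
frontier location of some valid configuration, then form a maximum number of
additional new bonds in a bond-maximizing valid configuration. -/
def Step (S : FTAMSystem) (α α'' : Assembly) : Prop :=
  ∃ c f, ValidConfig α c ∧ IsFrontier S α c f ∧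
    ∃ N, ExtendsBonds (attachAsm α f) N ∧
      (∀ N', ExtendsBonds (attachAsm α f) N' → N'.length ≤ N.length) ∧
      α'' = ((attachAsm α f).1, (attachAsm α f).2 ++ N)

/-- Producible assemblies of an FTAM system. -/
inductive Producible (S : FTAMSystem) : Assembly → Prop
  | seed : Producible S S.2.1
  | step {α α' : Assembly} : Producible S α → Step S α α' → Producible S α'

/-- An assembly is terminal if no valid configuration admits a frontier location. -/
def Terminal (S : FTAMSystem) (α : Assembly) : Prop :=
  ∀ c, ValidConfig α c → ∀ f, ¬ IsFrontier S α c f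

/-- A terminal assembly of the system: producible and terminal. -/
def TerminalAsm (S : FTAMSystem) (α : Assembly) : Prop := Producible S α ∧ Terminal S α

/-! ### Rigid components, faces -/

/-- The restriction of a configuration to the bonds lying inside a set `R` of tiles. -/
def restrictCfg (α : Assembly) (R : Finset ℕ) (c : Configuration) : Configuration :=
  ((α.2.zip c).filter fun bc => decide (bc.1.1.1 ∈ R ∧ bc.1.2.1 ∈ R)).map Prod.snd

/-- `R` is a rigid component of `α`: the subassembly on `R` cannot reconfigure except
by inversion into its chiral configuration. -/
def RigidComponent (α : Assembly) (R : Finset ℕ) : Prop :=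
  (∀ i ∈ R, i < α.1.length) ∧
    ∀ c c', ValidConfig α c → ValidConfig α c' →
      restrictCfg α R c' = restrictCfg α R c ∨
        restrictCfg α R c' = chiralCfg (restrictCfg α R c)

/-- Tiles `i` and `j` are joined by a rigid bond of `α`. -/
def rigidBondBetween (α : Assembly) (i j : ℕ) : Prop :=
  ∃ b ∈ α.2, ((b.1.1 = i ∧ b.2.1 = j) ∨ (b.1.1 = j ∧ b.2.1 = i)) ∧
    glueFlexible (glueAt α b.1) = false

/-- A face of an assembly: a maximal nonempty set of tiles all connected to each other
through rigid bonds (hence coplanar in every embedding). -/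
def IsFace (α : Assembly) (F : Finset ℕ) : Prop :=
  F.Nonempty ∧ (∀ i ∈ F, i < α.1.length) ∧
  (∀ i ∈ F, ∀ j ∈ F,
    Relation.ReflTransGen (fun a b => rigidBondBetween α a b ∧ a ∈ F ∧ b ∈ F) i j) ∧
  ∀ i ∈ F, ∀ j, rigidBondBetween α i j → j ∈ F

/-- Two placements are coplanar: same normal axis and same plane offset. -/
def coplanar (p p' : Placement) : Prop :=
  normalAxis p = normalAxis p' ∧ p.1 (normalAxis p) = p'.1 (normalAxis p)

/-! ### Shapes, congruence, polycubes and outlines -/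

/-- A tile location: a minimal corner together with the axis normal to its plane. -/
abbrev TileLoc := Vec3 × Fin 3

/-- The shape of an embedding: the set of tile locations it occupies. -/
def shapeOf (e : Embedding) : Set TileLoc := {la | ∃ p ∈ e, la = (p.1, normalAxis p)}

/-- A signed permutation of the coordinates of `ℤ³` (an element of the hyperoctahedral
group `O(3, ℤ)`). -/
structure SignedPerm where
  perm : Equiv.Perm (Fin 3)
  sgn : Fin 3 → Bool

/-- Action of a signed permutation on a vector. -/
def SignedPerm.act (g : SignedPerm) (v : Vec3) : Vec3 :=
  fun i => (if g.sgn i then -1 else 1) * v (g.perm.symm i)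

/-- Determinant of a signed permutation. -/
def SignedPerm.det (g : SignedPerm) : ℤ :=
  ((Equiv.Perm.sign g.perm : ℤˣ) : ℤ) * ∏ i, (if g.sgn i then (-1 : ℤ) else 1)

/-- Trace of a signed permutation. -/
def SignedPerm.trace (g : SignedPerm) : ℤ :=
  ∑ i, if g.perm i = i then (if g.sgn i then (-1 : ℤ) else 1) else 0

/-- The opposite corner of the tile at location `la` across its diagonal. -/
def tileDiag (la : TileLoc) : Vec3 := la.1 + unitVec (la.2 + 1) + unitVec (la.2 + 2)

/-- The image of a tile location under the rigid motion `v ↦ g.act v + t`. -/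
def mapTile (g : SignedPerm) (t : Vec3) (la : TileLoc) : TileLoc :=
  (fun i => min (g.act la.1 i + t i) (g.act (tileDiag la) i + t i), g.perm la.2)

/-- Two shapes are congruent: one is carried to the other by a rotation (a signed
permutation of determinant `1`) followed by a translation. -/
def CongruentShapes (s s' : Set TileLoc) : Prop :=
  ∃ g t, SignedPerm.det g = 1 ∧ (mapTile g t) '' s = s'

/-- Face-adjacency of unit cubes (given by their minimal corners). -/
def cubeAdj (a b : Vec3) : Prop := ∃ i, b = a + unitVec i ∨ a = b + unitVec i

/-- A polycube: a nonempty finite face-connected set of unit cubes. -/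
def IsPolycube (P : Finset Vec3) : Prop :=
  P.Nonempty ∧ ∀ a ∈ P, ∀ b ∈ P,
    Relation.ReflTransGen (fun x y => cubeAdj x y ∧ x ∈ P ∧ y ∈ P) a b

/-- The outline of a polycube: the tile locations on its outer surface (squares with
exactly one of the two adjacent cubes in the polycube). -/
def outline (P : Finset Vec3) : Set TileLoc :=
  {la | Xor' (la.1 - unitVec la.2 ∈ P) (la.1 ∈ P)}

/-- The image of a unit cube (given by its minimal corner) under `v ↦ g.act v + t`. -/
def cubeImage (g : SignedPerm) (t : Vec3) (c : Vec3) : Vec3 :=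
  fun i => min (g.act c i + t i) (g.act (c + fun _ => (1 : ℤ)) i + t i)

/-- The polycube has a plane of mirror symmetry: an affine involution whose linear part
is a signed permutation of determinant `-1` and trace `1` (a plane reflection) maps the
polycube onto itself. -/
def MirrorSymmetric (P : Finset Vec3) : Prop :=
  ∃ g t, SignedPerm.det g = -1 ∧ SignedPerm.trace g = 1 ∧
    (∀ v, g.act (g.act v + t) + t = v) ∧
    ∀ c, c ∈ P ↔ cubeImage g t c ∈ P

/-- A corner of the `2 × 2 × 2` block of cubes around a lattice point. -/
abbrev Corner := Fin 3 → Bool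

/-- Action of a signed permutation on corners of the `2 × 2 × 2` block. -/
def SignedPerm.actB (g : SignedPerm) (δ : Corner) : Corner :=
  fun i => xor (g.sgn i) (δ (g.perm.symm i))

def cornerVec (δ : Corner) : Vec3 := fun i => if δ i then 1 else 0

/-- The local pattern of the polycube `P` at the lattice point `v`: which of the eight
cubes of the `2 × 2 × 2` block around `v` belong to `P`. -/
def localPattern (P : Finset Vec3) (v : Vec3) : Set Corner :=
  {δ | v - (fun _ => (1 : ℤ)) + cornerVec δ ∈ P}

/-- The pattern of two cubes sharing exactly one edge (vertex type 3). -/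
def edgePairPattern : Set Corner :=
  {δ | (∀ i, δ i = false) ∨ (δ 0 = true ∧ δ 1 = true ∧ δ 2 = false)}

/-- A reconfigurable vertex of a polycube: the local `2 × 2 × 2` pattern is, up to a
symmetry of the cube, the edge-sharing pair of cubes (type 3) or its complement
(type 7); these are the vertices whose six incident surface tiles are joined in a loop
entirely by flexible bonds. -/
def ReconfigurableVertex (P : Finset Vec3) (v : Vec3) : Prop :=
  ∃ g : SignedPerm,
    (∀ δ : Corner, δ ∈ localPattern P v ↔ SignedPerm.actB g δ ∈ edgePairPattern) ∨
    (∀ δ : Corner, δ ∈ localPattern P v ↔ SignedPerm.actB g δ ∉ edgePairPattern)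

/-- An edge location: a unit lattice segment from `s.1` to `s.1 + unitVec s.2`. -/
abbrev EdgeLoc := Vec3 × Fin 3

/-- The four boundary edge segments of a tile location. -/
def sidesOfTile (la : TileLoc) : Finset EdgeLoc :=
  {(la.1, la.2 + 1), (la.1 + unitVec (la.2 + 2), la.2 + 1),
   (la.1, la.2 + 2), (la.1 + unitVec (la.2 + 1), la.2 + 2)}

/-- The outline tiles incident to an edge segment. -/
def incidentTiles (P : Finset Vec3) (s : EdgeLoc) : Set TileLoc :=
  {la | la ∈ outline P ∧ s ∈ sidesOfTile la}

/-- A crease edge (an edge of the polycube): an edge of the outline at which the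
surface is not flat (not exactly two incident coplanar outline tiles). -/
def CreaseEdge (P : Finset Vec3) (s : EdgeLoc) : Prop :=
  (incidentTiles P s).Nonempty ∧
    ¬ ∃ la la' : TileLoc, la ≠ la' ∧ incidentTiles P s = {la, la'} ∧ la.2 = la'.2

def edgeEndpoints (s : EdgeLoc) : Set Vec3 := {s.1, s.1 + unitVec s.2}

def edgesAdjacent (s s' : EdgeLoc) : Prop :=
  ∃ v, v ∈ edgeEndpoints s ∧ v ∈ edgeEndpoints s'

/-- The edges of a polycube are all connected: any two crease edges are joined by a
chain of crease edges sharing endpoints. -/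
def EdgesConnected (P : Finset Vec3) : Prop :=
  ∀ s, CreaseEdge P s → ∀ s', CreaseEdge P s' →
    Relation.ReflTransGen
      (fun a b => edgesAdjacent a b ∧ CreaseEdge P a ∧ CreaseEdge P b) s s'

/-- The system deterministically assembles the shape `s`: it has a terminal assembly
and every embedding of every valid configuration of every terminal assembly has shape
`s` (up to translation and rotation). -/
def DeterministicallyAssembles (S : FTAMSystem) (s : Set TileLoc) : Prop :=
  (∃ α, TerminalAsm S α) ∧
    ∀ α, TerminalAsm S α → ∀ c e, Realizes α c e → CongruentShapes (shapeOf e) s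

/-! ### Complexity-theoretic notions -/

instance : Encodable (FTAMSystem × Assembly) := inferInstance
instance : Primcodable FTAMSystem := inferInstance


/-- A function `ℕ → ℕ` computable in polynomial time by a two-stack Turing machine
(with respect to binary encodings). -/
def PolyTimeFun (f : ℕ → ℕ) : Prop :=
  Nonempty (Turing.TM2ComputableInPolyTime Computability.encodingNatBool.encode
    Computability.encodingNatBool.encode f)

/-- A Boolean predicate on `ℕ` computable in polynomial time. -/
def PolyTimePred (f : ℕ → Bool) : Prop :=
  Nonempty (Turing.TM2ComputableInPolyTime Computability.encodingNatBool.encode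
    Computability.encodingBoolBool.encode f)

/-- A language over `ℕ` is in NP: some polynomial-time verifier accepts exactly the
members, given a certificate of polynomially bounded size. -/
def InNP (L : ℕ → Prop) : Prop :=
  ∃ (V : ℕ → Bool) (p : Polynomial ℕ), PolyTimePred V ∧
    ∀ x, L x ↔ ∃ w, Nat.size w ≤ p.eval (Nat.size x) ∧ V (Nat.pair x w) = true

/-- NP-hardness under polynomial-time many-one reductions. -/
def NPHard (L : ℕ → Prop) : Prop :=
  ∀ L', InNP L' → ∃ f : ℕ → ℕ, PolyTimeFun f ∧ ∀ x, L' x ↔ L (f x)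

/-- A language is co-NP-complete if its complement is in NP and its complement is
NP-hard. -/
def CoNPComplete (L : ℕ → Prop) : Prop :=
  InNP (fun x => ¬ L x) ∧ NPHard (fun x => ¬ L x)

/-- The Rigidity-from-assembly problem, as a language over `ℕ` via the canonical
encoding (inputs that encode a pair of a system and a producible assembly are
yes-instances exactly when the assembly is rigid). -/
def RigidityFromAssembly (n : ℕ) : Prop :=
  ∀ (S : FTAMSystem) (α : Assembly),
    Encodable.encode (S, α) = n → Producible S α → Rigid α

/-- The Terminality-from-assembly problem, as a language over `ℕ`. -/
def TerminalityFromAssembly (n : ℕ) : Prop :=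
  ∀ (S : FTAMSystem) (α : Assembly),
    Encodable.encode (S, α) = n → Producible S α → Terminal S α

/-! ### 3SAT -/

/-- A literal: a variable index and a polarity. -/
abbrev Lit := ℕ × Bool

/-- A clause with three literals. -/
abbrev Clause3 := Lit × Lit × Lit

/-- A Boolean formula in 3CNF. -/
abbrev CNF3 := List Clause3

def litVal (v : ℕ → Bool) (l : Lit) : Bool := if l.2 then v l.1 else ! v l.1

/-- Satisfiability of a 3CNF formula. -/
def Sat3 (φ : CNF3) : Prop :=
  ∃ v : ℕ → Bool, ∀ cl ∈ φ,
    litVal v cl.1 = true ∨ litVal v cl.2.1 = true ∨ litVal v cl.2.2 = true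


/-- The four lattice corners of a placed tile. -/
def placementCorners (p : Placement) : Finset Vec3 :=
  {p.1, p.1 + unitVec (normalAxis p + 1), p.1 + unitVec (normalAxis p + 2),
   p.1 + unitVec (normalAxis p + 1) + unitVec (normalAxis p + 2)}

/-- The solid `n × n × n` cube as a polycube. -/
def cubeP (n : ℕ) : Finset Vec3 :=
  ((Finset.range n) ×ˢ (Finset.range n) ×ˢ (Finset.range n)).image
    fun x => ![(x.1 : ℤ), (x.2.1 : ℤ), (x.2.2 : ℤ)]

/-!
Since `R` is a rigid component, every valid configuration `c'` agrees on `R` either with `c`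
or with its chiral configuration. Inversion preserves validity: mirror an embedding in the
plane `x = 0` and turn every tile over. The mirror reverses handedness and the flip restores
it, so each side of a tile goes to the mirror image of the same side, while the front and
back of each tile are exchanged, which swaps Up and Down. As restriction to `R` commutes
with inversion, in the second case the chiral configuration of `c'` agrees with `c` on `R`,
hence equals `c`. So the valid configurations of `α` are exactly `c` and its chiral
configuration.
-/

lemma _root_.List.getD_map_of_lt {γ δ : Type*} {l : List γ} (f : γ → δ) {n : ℕ}
    (h : n < l.length) (d : δ) (d' : γ) : (l.map f).getD n d = f (l.getD n d') := by
  rw [List.getD_eq_getElem _ _ (by simpa using h), List.getD_eq_getElem _ _ h, List.getElem_map]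

def mirror : Vec3 ≃ₗ[ℤ] Vec3 where
  toFun v i := if i = 0 then -v 0 else v i
  invFun v i := if i = 0 then -v 0 else v i
  map_add' u v := by funext i; by_cases hi : i = 0 <;> simp [hi]; ring
  map_smul' t v := by funext i; by_cases hi : i = 0 <;> simp [hi]
  left_inv v := by funext i; by_cases hi : i = 0 <;> simp [hi]
  right_inv v := by funext i; by_cases hi : i = 0 <;> simp [hi]

def mirrorDir (d : Dir) : Dir := (d.1, if d.1 = 0 then !d.2 else d.2)

lemma mirror_dirVec (d : Dir) : mirror (dirVec d) = dirVec (mirrorDir d) := by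
  obtain ⟨a, s⟩ := d
  funext j
  by_cases hj : j = 0 <;> by_cases ha : a = 0 <;> cases s <;>
    simp [mirror, dirVec, mirrorDir, unitVec, hj, ha] <;> simp [eq_comm, Ne.symm, ha]

lemma dirVec_not_snd (d : Dir) : dirVec (d.1, !d.2) = -dirVec d := by
  funext j; cases hd : d.2 <;> simp [dirVec, hd]

lemma cross_mirror (u v : Vec3) : cross (mirror u) (mirror v) = -mirror (cross u v) := by
  funext i; fin_cases i <;> simp [cross, mirror] <;> ring

lemma cross_neg_right (u v : Vec3) : cross u (-v) = -cross u v := by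
  funext i; simp only [cross, Pi.neg_apply]; ring

/-- The tile mirrored and turned over. Its corner's `x`-coordinate `a` becomes `-a - 1` unless
the tile is normal to the `x`-axis, as the mirror image of `[a, a + 1]` is `[-a - 1, -a]`. -/
def invertPlacement (p : Placement) : Placement :=
  ((fun i => if i = 0 then (if p.2.1.1 = 0 then -p.1 0 else -p.1 0 - 1) else p.1 i),
   ((mirrorDir p.2.1).1, !(mirrorDir p.2.1).2), mirrorDir p.2.2)

section invertPlacement

variable (p p' : Placement) (s s' : Side)

lemma normalVec_invertPlacement : normalVec (invertPlacement p) = -mirror (normalVec p) := by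
  rw [normalVec, invertPlacement, dirVec_not_snd, ← mirror_dirVec]
  rfl

lemma center2_invertPlacement : center2 (invertPlacement p) = mirror (center2 p) := by
  obtain ⟨l, ⟨a, sn⟩, d⟩ := p
  funext i
  fin_cases a <;> fin_cases i <;>
    simp [center2, normalAxis, invertPlacement, mirror, mirrorDir, unitVec] <;> ring

lemma sideDir_invertPlacement : sideDir (invertPlacement p) s = mirror (sideDir p s) := by
  have hnorth : dirVec (invertPlacement p).2.2 = mirror (dirVec p.2.2) :=
    (mirror_dirVec _).symm
  unfold sideDir
  rw [normalVec_invertPlacement, hnorth, cross_neg_right, cross_mirror]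
  split_ifs <;> simp

lemma sideMid_invertPlacement : sideMid (invertPlacement p) s = mirror (sideMid p s) := by
  rw [sideMid, sideMid, map_add, center2_invertPlacement, sideDir_invertPlacement]

lemma sideAxis_invertPlacement : sideAxis (invertPlacement p) s = mirror (sideAxis p s) := by
  rw [sideAxis, sideAxis, sideDir_invertPlacement, normalVec_invertPlacement, cross_neg_right,
    cross_mirror, neg_neg]

lemma placementOK_invertPlacement : PlacementOK (invertPlacement p) ↔ PlacementOK p :=
  Iff.rfl

lemma normalAxis_invertPlacement : normalAxis (invertPlacement p) = normalAxis p := rfl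

lemma overlap_invertPlacement :
    overlap (invertPlacement p) (invertPlacement p') ↔ overlap p p' := by
  rw [overlap, overlap, normalAxis_invertPlacement, normalAxis_invertPlacement]
  refine and_congr_left fun hnormal => ⟨fun h => funext fun i => ?_, fun h => ?_⟩
  · have hi := congrFun h i
    simp only [invertPlacement] at hi
    simp only [normalAxis] at hnormal
    split_ifs at hi <;> simp_all
  · simp only [normalAxis] at hnormal
    simp only [invertPlacement, h, hnormal]

lemma sidesAdjacent_invertPlacement :
    sidesAdjacent (invertPlacement p) s (invertPlacement p') s' ↔ sidesAdjacent p s p' s' := by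
  simp only [sidesAdjacent, sideMid_invertPlacement, sideAxis_invertPlacement, ← map_neg,
    mirror.injective.eq_iff]

lemma orientedBond_invertPlacement (θ : Orientation) :
    orientedBond (invertPlacement p) s (invertPlacement p') s' (invertOr θ) ↔
      orientedBond p s p' s' θ := by
  unfold orientedBond
  rw [sidesAdjacent_invertPlacement, normalVec_invertPlacement, normalVec_invertPlacement,
    center2_invertPlacement, center2_invertPlacement]
  refine and_congr_right fun _ => ?_
  fin_cases θ <;>
    simp [invertOr, Orientation.up, Orientation.straight, smul_neg, sub_eq_add_neg,
      ← map_smul, ← map_add, ← map_neg, mirror.injective.eq_iff]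

end invertPlacement

lemma invertOr_invertOr (o : Orientation) : invertOr (invertOr o) = o := by
  fin_cases o <;> rfl

lemma invertOr_eq_straight_iff {o : Orientation} :
    invertOr o = Orientation.straight ↔ o = Orientation.straight := by
  fin_cases o <;> decide

lemma chiralCfg_chiralCfg (c : Configuration) : chiralCfg (chiralCfg c) = c := by
  rw [chiralCfg, chiralCfg, List.map_map, (funext invertOr_invertOr : invertOr ∘ invertOr = id),
    List.map_id]

lemma chiralCfg_getD (c : Configuration) (k : ℕ) :
    (chiralCfg c).getD k Orientation.straight = invertOr (c.getD k Orientation.straight) :=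
  List.getD_map c Orientation.straight invertOr

lemma Realizes.chiralCfg {α : Assembly} {c : Configuration} {e : Embedding}
    (h : Realizes α c e) : Realizes α (chiralCfg c) (e.map invertPlacement) := by
  obtain ⟨hWF, hlen, hclen, hOK, hov, hbond, hrigid, hmid⟩ := h
  have hends : ∀ k < α.2.length,
      (α.2.getD k default).1.1 < e.length ∧ (α.2.getD k default).2.1 < e.length := fun k hk =>
    hlen ▸ hWF.1 _ (List.getD_eq_getElem _ _ hk ▸ List.getElem_mem hk)
  have hget : ∀ i < e.length, (e.map invertPlacement).getD i default =
      invertPlacement (e.getD i default) := fun i hi => List.getD_map_of_lt _ hi _ _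
  refine ⟨hWF, by simpa using hlen, by simpa [FTAM.chiralCfg] using hclen, ?_, ?_, ?_, ?_, ?_⟩
  · exact List.forall_mem_map.2 fun p hp => (placementOK_invertPlacement p).2 (hOK p hp)
  · intro i j hi hj hij
    rw [List.length_map] at hi hj
    rw [hget i hi, hget j hj, overlap_invertPlacement]
    exact hov i j hi hj hij
  · intro k hk
    rw [hget _ (hends k hk).1, hget _ (hends k hk).2, chiralCfg_getD,
      orientedBond_invertPlacement]
    exact hbond k hk
  · intro k hk hflex
    rw [chiralCfg_getD, hrigid k hk hflex]
    rfl
  · intro k k' hk hk' hne hs hs'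
    rw [chiralCfg_getD, invertOr_eq_straight_iff] at hs hs'
    rw [hget _ (hends k hk).1, hget _ (hends k' hk').1, sideMid_invertPlacement,
      sideMid_invertPlacement, mirror.injective.ne_iff]
    exact hmid k k' hk hk' hne hs hs'

lemma ValidConfig.chiralCfg {α : Assembly} {c : Configuration} (h : ValidConfig α c) :
    ValidConfig α (chiralCfg c) :=
  h.elim fun _ he => ⟨_, he.chiralCfg⟩

lemma restrictCfg_chiralCfg (α : Assembly) (R : Finset ℕ) (c : Configuration) :
    restrictCfg α R (chiralCfg c) = chiralCfg (restrictCfg α R c) := by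
  rw [restrictCfg, restrictCfg, chiralCfg, chiralCfg, List.zip_map_right, List.filter_map,
    List.map_map, List.map_map]
  rfl

lemma restrictCfg_of_forall_mem {α : Assembly} {R : Finset ℕ} {c : Configuration}
    (hR : ∀ b ∈ α.2, b.1.1 ∈ R ∧ b.2.1 ∈ R) (hlen : c.length ≤ α.2.length) :
    restrictCfg α R c = c := by
  rw [restrictCfg, List.filter_eq_self.2, List.map_snd_zip hlen]
  intro bc hbc
  simpa using hR _ (List.of_mem_zip hbc).1

lemma ValidConfig.restrictCfg_range {α : Assembly} {c : Configuration}
    (h : ValidConfig α c) : restrictCfg α (Finset.range α.1.length) c = c := by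
  obtain ⟨_, hWF, -, hclen, -⟩ := h
  exact restrictCfg_of_forall_mem (fun b hb => by simpa using hWF.1 b hb) hclen.le

lemma Rigid.rigidComponent_range {α : Assembly} (h : Rigid α) :
    RigidComponent α (Finset.range α.1.length) := by
  refine ⟨fun i hi => Finset.mem_range.1 hi, fun c c' hc hc' => ?_⟩
  rw [hc.restrictCfg_range, hc'.restrictCfg_range]
  exact h.2 c c' hc hc'

lemma rigid_of_forall_eq_or_eq_chiralCfg {α : Assembly} {c : Configuration}
    (hc : ValidConfig α c) (h : ∀ c', ValidConfig α c' → c' = c ∨ c' = chiralCfg c) :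
    Rigid α := by
  refine ⟨⟨c, hc⟩, fun c₁ c₂ hc₁ hc₂ => ?_⟩
  rcases h c₁ hc₁ with h₁ | h₁ <;> rcases h c₂ hc₂ with h₂ | h₂ <;> rw [h₁, h₂]
  · exact Or.inl rfl
  · exact Or.inr rfl
  · exact Or.inr (chiralCfg_chiralCfg c).symm
  · exact Or.inl rfl

lemma RigidComponent.eq_or_eq_chiralCfg {α : Assembly} {R : Finset ℕ} {c c' : Configuration}
    (hR : RigidComponent α R) (hc : ValidConfig α c) (hc' : ValidConfig α c')
    (h : ∀ c', ValidConfig α c' → restrictCfg α R c' = restrictCfg α R c → c' = c) :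
    c' = c ∨ c' = chiralCfg c := by
  refine (hR.2 c c' hc hc').imp (h c' hc') fun hchiral => ?_
  have : chiralCfg c' = c := h _ hc'.chiralCfg <| by
    rw [restrictCfg_chiralCfg, hchiral, chiralCfg_chiralCfg]
  rw [← this, chiralCfg_chiralCfg]

/-- If `R` is a rigid component of `α` and no valid configuration
other than `c` keeps `R` in the same orientation as in `c`, then the whole assembly is
a rigid component (its only possible reconfiguration is inversion). -/
theorem rigid_component_forces_rigidity
    (α : Assembly) (R : Finset ℕ) (c : Configuration)
    (hR : RigidComponent α R) (hc : ValidConfig α c)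
    (h : ∀ c', ValidConfig α c' → restrictCfg α R c' = restrictCfg α R c → c' = c) :
    RigidComponent α (Finset.range α.1.length) :=
  (rigid_of_forall_eq_or_eq_chiralCfg hc fun _ hc' => hR.eq_or_eq_chiralCfg hc hc' h)
    |>.rigidComponent_range

end FTAM
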